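/- Fix an integer ℓ > 2. A partition λ is a node of the ladder crystal B(Λ0)^L if and only if there does not exist a box (i,j) in the Young diagram of λ such that h_{(i,j)}^λ = ℓ · arm(i,j). Moreover, every L-partition is a node of B(Λ0)^L. -/

import Mathlib

noncomputable section

/-!
Common combinatorial definitions: partitions (English notation, rows indexed from 1),
Young diagrams, hooks, rim hooks, ladders, residues, crystal operators (classical and
ladder versions), locked boxes, regularization classes, dominance order.
-/

structure YPartition where
  part : ℕ → ℕ
  zero_at_zero : part 0 = 0
  antitone : ∀ i j : ℕ, 1 ≤ i → i ≤ j → part j ≤ part i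
  eventually_zero : ∃ N : ℕ, ∀ i : ℕ, N ≤ i → part i = 0

namespace YPartition

/-- The set of boxes of the Young diagram of `μ` (row, column), both indices ≥ 1. -/
def cells (μ : YPartition) : Set (ℕ × ℕ) :=
  {p | 1 ≤ p.1 ∧ 1 ≤ p.2 ∧ p.2 ≤ μ.part p.1}

/-- The length of column `b`: the number of rows containing a box in column `b`. -/
def colLen (μ : YPartition) (b : ℕ) : ℕ :=
  Nat.card {a : ℕ | 1 ≤ a ∧ b ≤ μ.part a}

/-- The arm of box `(a,b)`: boxes strictly to its right in its row. -/
def arm (μ : YPartition) (a b : ℕ) : ℕ := μ.part a - b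

/-- The leg of box `(a,b)`: boxes strictly below it in its column. -/
def leg (μ : YPartition) (a b : ℕ) : ℕ := μ.colLen b - a

/-- The hook length of the box `(a,b)`: arm + leg + 1. -/
def hook (μ : YPartition) (a b : ℕ) : ℕ := (μ.part a - b) + (μ.colLen b - a) + 1

/-- The number of boxes of `μ`. -/
def size (μ : YPartition) : ℕ := μ.cells.ncard

/-- The number of (nonzero) parts of `μ`. -/
def length (μ : YPartition) : ℕ := μ.colLen 1

/-- `μ` is an `(ℓ,0)`-JM partition: there are no boxes `(a,b)`, `(a,y)`, `(x,b)` with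
`ℓ ∣ hook (a,b)` while `ℓ` divides neither `hook (a,y)` nor `hook (x,b)`. -/
def IsJM (ℓ : ℕ) (μ : YPartition) : Prop :=
  ¬ ∃ a b y x : ℕ, (a, b) ∈ μ.cells ∧ (a, y) ∈ μ.cells ∧ (x, b) ∈ μ.cells ∧
    ℓ ∣ μ.hook a b ∧ ¬ ℓ ∣ μ.hook a y ∧ ¬ ℓ ∣ μ.hook x b

/-- Two boxes share an edge. -/
def BoxAdjacent (p q : ℕ × ℕ) : Prop :=
  (p.1 = q.1 ∧ (p.2 + 1 = q.2 ∨ q.2 + 1 = p.2)) ∨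
  (p.2 = q.2 ∧ (p.1 + 1 = q.1 ∨ q.1 + 1 = p.1))

/-- A set of boxes is connected (via shared edges, inside the set). -/
def SetConnected (S : Set (ℕ × ℕ)) : Prop :=
  ∀ p ∈ S, ∀ q ∈ S,
    Relation.ReflTransGen (fun x y => x ∈ S ∧ y ∈ S ∧ BoxAdjacent x y) p q

/-- `S` contains no 2 × 2 square of boxes. -/
def HasNoSquare (S : Set (ℕ × ℕ)) : Prop :=
  ¬ ∃ a b : ℕ, (a, b) ∈ S ∧ (a + 1, b) ∈ S ∧ (a, b + 1) ∈ S ∧ (a + 1, b + 1) ∈ S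

/-- `S` is a removable `ℓ`-rim hook of `μ`: a connected set of `ℓ` boxes of `μ` with no
2 × 2 square whose removal leaves the Young diagram of a partition. -/
def IsRimHook (ℓ : ℕ) (μ : YPartition) (S : Set (ℕ × ℕ)) : Prop :=
  S ⊆ μ.cells ∧ S.ncard = ℓ ∧ SetConnected S ∧ HasNoSquare S ∧
    ∃ ν : YPartition, ν.cells = μ.cells \ S

/-- `S` is contained in a single row. -/
def HorizontalHook (S : Set (ℕ × ℕ)) : Prop := ∃ a : ℕ, ∀ p ∈ S, p.1 = a

/-- `S` is contained in a single column. -/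
def VerticalHook (S : Set (ℕ × ℕ)) : Prop := ∃ b : ℕ, ∀ p ∈ S, p.2 = b

/-- Two sets of boxes are adjacent when some box of one shares an edge with a box of the other. -/
def SetsAdjacent (R S : Set (ℕ × ℕ)) : Prop := ∃ p ∈ R, ∃ q ∈ S, BoxAdjacent p q

/-- An `ℓ`-core: a partition with no removable `ℓ`-rim hook. -/
def IsCore (ℓ : ℕ) (μ : YPartition) : Prop := ¬ ∃ S : Set (ℕ × ℕ), IsRimHook ℓ μ S

/-- `p` and `q` lie on the same ladder: going down one column step the row increases
by `ℓ - 1`. -/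
def SameLadder (ℓ : ℕ) (p q : ℕ × ℕ) : Prop :=
  (q.1 : ℤ) - (p.1 : ℤ) = ((ℓ : ℤ) - 1) * ((p.2 : ℤ) - (q.2 : ℤ))

/-- The index of the ladder through `p`: the ladder through `(k,1)` has index `k`. -/
def ladderIdx (ℓ : ℕ) (p : ℕ × ℕ) : ℕ := p.1 + (ℓ - 1) * (p.2 - 1)

/-- The residue of position `(a,b)` is `b - a` mod `ℓ`. -/
def res (ℓ : ℕ) (p : ℕ × ℕ) : ℕ := (((p.2 : ℤ) - (p.1 : ℤ)) % (ℓ : ℤ)).toNat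

/-- `p` is a removable box of `μ`. -/
def Removable (μ : YPartition) (p : ℕ × ℕ) : Prop :=
  1 ≤ p.1 ∧ p.2 = μ.part p.1 ∧ μ.part (p.1 + 1) < p.2

/-- `p` is an addable box of `μ`. -/
def Addable (μ : YPartition) (p : ℕ × ℕ) : Prop :=
  1 ≤ p.1 ∧ p.2 = μ.part p.1 + 1 ∧ (p.1 = 1 ∨ p.2 ≤ μ.part (p.1 - 1))

/-- The removable `i`-boxes of `μ`. -/
def RemovableRes (ℓ i : ℕ) (μ : YPartition) : Set (ℕ × ℕ) :=
  {p | Removable μ p ∧ res ℓ p = i}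

/-- The addable `i`-boxes of `μ`. -/
def AddableRes (ℓ i : ℕ) (μ : YPartition) : Set (ℕ × ℕ) :=
  {p | Addable μ p ∧ res ℓ p = i}

/-- Ladder reading order (reflexive): ladders left to right, top to bottom within a ladder.
`LadderLE ℓ p q` means `p` is read before (or equal to) `q`. -/
def LadderLE (ℓ : ℕ) (p q : ℕ × ℕ) : Prop :=
  ladderIdx ℓ p < ladderIdx ℓ q ∨ (ladderIdx ℓ p = ladderIdx ℓ q ∧ p.1 ≤ q.1)

/-- Strict ladder reading order. -/
def LadderLT (ℓ : ℕ) (p q : ℕ × ℕ) : Prop :=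
  ladderIdx ℓ p < ladderIdx ℓ q ∨ (ladderIdx ℓ p = ladderIdx ℓ q ∧ p.1 < q.1)

/-- Classical reading order (reflexive): rows from bottom to top.
`RowLE p q` means `p` is read before (or equal to) `q`. -/
def RowLE (p q : ℕ × ℕ) : Prop := q.1 ≤ p.1

/-- Given a reading order `le`, a set `Rem` of `-` marks and `Add` of `+` marks, a `-` at `p`
survives the cancellation of adjacent `-+` pairs iff every interval of the reading word
starting at `p` contains strictly more `-`'s than `+`'s. -/
def NormalIn (le : ℕ × ℕ → ℕ × ℕ → Prop) (Rem Add : Set (ℕ × ℕ)) (p : ℕ × ℕ) : Prop :=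
  p ∈ Rem ∧ ∀ q ∈ Rem ∪ Add, le p q →
    (Add ∩ {s | le p s ∧ le s q}).ncard < (Rem ∩ {s | le p s ∧ le s q}).ncard

/-- A `+` at `q` survives the cancellation of adjacent `-+` pairs iff every interval of the
reading word ending at `q` contains strictly more `+`'s than `-`'s. -/
def ConormalIn (le : ℕ × ℕ → ℕ × ℕ → Prop) (Rem Add : Set (ℕ × ℕ)) (q : ℕ × ℕ) : Prop :=
  q ∈ Add ∧ ∀ p ∈ Rem ∪ Add, le p q →
    (Rem ∩ {s | le p s ∧ le s q}).ncard < (Add ∩ {s | le p s ∧ le s q}).ncard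

/-- Ladder normal `i`-box. -/
def LadderNormal (ℓ i : ℕ) (μ : YPartition) (p : ℕ × ℕ) : Prop :=
  NormalIn (LadderLE ℓ) (RemovableRes ℓ i μ) (AddableRes ℓ i μ) p

/-- Ladder conormal `i`-box. -/
def LadderConormal (ℓ i : ℕ) (μ : YPartition) (p : ℕ × ℕ) : Prop :=
  ConormalIn (LadderLE ℓ) (RemovableRes ℓ i μ) (AddableRes ℓ i μ) p

/-- Normal `i`-box (classical signature). -/
def ClassNormal (ℓ i : ℕ) (μ : YPartition) (p : ℕ × ℕ) : Prop :=
  NormalIn RowLE (RemovableRes ℓ i μ) (AddableRes ℓ i μ) p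

/-- Conormal `i`-box (classical signature). -/
def ClassConormal (ℓ i : ℕ) (μ : YPartition) (p : ℕ × ℕ) : Prop :=
  ConormalIn RowLE (RemovableRes ℓ i μ) (AddableRes ℓ i μ) p

/-- `ε̂_i(μ)`: number of ladder normal `i`-boxes. -/
def hatEps (ℓ i : ℕ) (μ : YPartition) : ℕ := {p | LadderNormal ℓ i μ p}.ncard

/-- `φ̂_i(μ)`: number of ladder conormal `i`-boxes. -/
def hatPhi (ℓ i : ℕ) (μ : YPartition) : ℕ := {p | LadderConormal ℓ i μ p}.ncard

/-- `ε_i(μ)`: number of normal `i`-boxes. -/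
def eps (ℓ i : ℕ) (μ : YPartition) : ℕ := {p | ClassNormal ℓ i μ p}.ncard

/-- `φ_i(μ)`: number of conormal `i`-boxes. -/
def phi (ℓ i : ℕ) (μ : YPartition) : ℕ := {p | ClassConormal ℓ i μ p}.ncard

/-- The ladder good `i`-box: the leftmost `-` of the reduced ladder `i`-signature. -/
def LadderGood (ℓ i : ℕ) (μ : YPartition) (p : ℕ × ℕ) : Prop :=
  LadderNormal ℓ i μ p ∧ ∀ q, LadderNormal ℓ i μ q → LadderLE ℓ p q

/-- The ladder cogood `i`-box: the rightmost `+` of the reduced ladder `i`-signature. -/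
def LadderCogood (ℓ i : ℕ) (μ : YPartition) (p : ℕ × ℕ) : Prop :=
  LadderConormal ℓ i μ p ∧ ∀ q, LadderConormal ℓ i μ q → LadderLE ℓ q p

/-- The good `i`-box (classical). -/
def ClassGood (ℓ i : ℕ) (μ : YPartition) (p : ℕ × ℕ) : Prop :=
  ClassNormal ℓ i μ p ∧ ∀ q, ClassNormal ℓ i μ q → RowLE p q

/-- The cogood `i`-box (classical). -/
def ClassCogood (ℓ i : ℕ) (μ : YPartition) (p : ℕ × ℕ) : Prop :=
  ClassConormal ℓ i μ p ∧ ∀ q, ClassConormal ℓ i μ q → RowLE q p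

/-- The ladder crystal operator `f̂_i` as a relation: `mu = f̂_i lam ≠ 0`. -/
def HatF (ℓ i : ℕ) (lam mu : YPartition) : Prop :=
  ∃ p, LadderCogood ℓ i lam p ∧ mu.cells = insert p lam.cells

/-- The ladder crystal operator `ê_i` as a relation: `mu = ê_i lam ≠ 0`. -/
def HatE (ℓ i : ℕ) (lam mu : YPartition) : Prop :=
  ∃ p, LadderGood ℓ i lam p ∧ mu.cells = lam.cells \ {p}

/-- The classical crystal operator `f̃_i` as a relation: `mu = f̃_i lam ≠ 0`. -/
def TildeF (ℓ i : ℕ) (lam mu : YPartition) : Prop :=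
  ∃ p, ClassCogood ℓ i lam p ∧ mu.cells = insert p lam.cells

/-- The classical crystal operator `ẽ_i` as a relation: `mu = ẽ_i lam ≠ 0`. -/
def TildeE (ℓ i : ℕ) (lam mu : YPartition) : Prop :=
  ∃ p, ClassGood ℓ i lam p ∧ mu.cells = lam.cells \ {p}

/-- `n`-fold composition of a relation. -/
def RelIter {α : Type} (r : α → α → Prop) : ℕ → α → α → Prop
  | 0 => fun a b => a = b
  | n + 1 => fun a b => ∃ c, r a c ∧ RelIter r n c b

/-- The empty partition. -/
def emptyP : YPartition where
  part := fun _ => 0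
  zero_at_zero := rfl
  antitone := fun _ _ _ _ => le_rfl
  eventually_zero := ⟨0, fun _ _ => rfl⟩

/-- `μ` is a node of the ladder crystal `B(Λ₀)^L`: it is obtained from the empty
partition by finitely many applications of the operators `f̂_i`, `0 ≤ i < ℓ`. -/
def LadderNode (ℓ : ℕ) (μ : YPartition) : Prop :=
  Relation.ReflTransGen (fun a b => ∃ i : ℕ, i < ℓ ∧ HatF ℓ i a b) emptyP μ

/-- The type I locking condition at `(a,b)`: every unoccupied position on the ladder of
`(a,b)` lying below it has an unoccupied position directly above it. -/
def LadderClear (ℓ : ℕ) (μ : YPartition) (a b : ℕ) : Prop :=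
  ∀ c d : ℕ, 1 ≤ c → 1 ≤ d → SameLadder ℓ (a, b) (c, d) → a < c →
    (c, d) ∉ μ.cells → (c - 1, d) ∉ μ.cells

/-- Locked boxes of `μ`. -/
inductive Locked (ℓ : ℕ) (μ : YPartition) : ℕ × ℕ → Prop where
  | typeI_top : ∀ b : ℕ, (1, b) ∈ μ.cells → LadderClear ℓ μ 1 b → Locked ℓ μ (1, b)
  | typeI_up : ∀ a b : ℕ, (a + 1, b) ∈ μ.cells → Locked ℓ μ (a, b) →
      LadderClear ℓ μ (a + 1) b → Locked ℓ μ (a + 1, b)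
  | typeII : ∀ a b b' : ℕ, (a, b) ∈ μ.cells → b < b' → Locked ℓ μ (a, b') → Locked ℓ μ (a, b)

/-- Number of boxes of `μ` on the `k`-th ladder. -/
def ladderCount (ℓ : ℕ) (μ : YPartition) (k : ℕ) : ℕ :=
  (μ.cells ∩ {p | ladderIdx ℓ p = k}).ncard

/-- `lam` and `mu` lie in the same regularization class: they have the same number of
boxes on every ladder. -/
def SameRegClass (ℓ : ℕ) (lam mu : YPartition) : Prop :=
  ∀ k : ℕ, ladderCount ℓ lam k = ladderCount ℓ mu k

/-- The boxes of `μ` are top-justified on each ladder. -/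
def TopJustified (ℓ : ℕ) (μ : YPartition) : Prop :=
  ∀ p ∈ μ.cells, ∀ q : ℕ × ℕ, 1 ≤ q.1 → 1 ≤ q.2 →
    ladderIdx ℓ q = ladderIdx ℓ p → q.1 < p.1 → q ∈ μ.cells

/-- `mu = R lam`: the regularization of `lam`, obtained by moving every box of `lam` to
the topmost unoccupied positions of its ladder. -/
def IsRegularization (ℓ : ℕ) (lam mu : YPartition) : Prop :=
  SameRegClass ℓ lam mu ∧ TopJustified ℓ mu

/-- Dominance order on partitions. -/
def DomLE (lam mu : YPartition) : Prop :=
  ∀ j : ℕ, ∑ i ∈ Finset.Icc 1 j, lam.part i ≤ ∑ i ∈ Finset.Icc 1 j, mu.part i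

/-- All (positive) positions on the `k`-th ladder. -/
def LadderPositions (ℓ k : ℕ) : Set (ℕ × ℕ) :=
  {p | 1 ≤ p.1 ∧ 1 ≤ p.2 ∧ ladderIdx ℓ p = k}

/-- The set of locked boxes of `μ`. -/
def lockedCells (ℓ : ℕ) (μ : YPartition) : Set (ℕ × ℕ) := {p | Locked ℓ μ p}

/-- The number of unlocked boxes of `μ` on the `k`-th ladder. -/
def unlockedCount (ℓ : ℕ) (μ : YPartition) (k : ℕ) : ℕ :=
  ((μ.cells ∩ LadderPositions ℓ k) \ lockedCells ℓ μ).ncard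

/-- The diagram `S μ`: locked boxes stay put, and on each ladder the unlocked boxes are
moved into the lowest positions of that ladder not occupied by locked boxes. -/
def SCells (ℓ : ℕ) (μ : YPartition) : Set (ℕ × ℕ) :=
  lockedCells ℓ μ ∪
    {p | 1 ≤ p.1 ∧ 1 ≤ p.2 ∧ p ∉ lockedCells ℓ μ ∧
      ((LadderPositions ℓ (ladderIdx ℓ p) ∩ {q | p.1 < q.1}) \ lockedCells ℓ μ).ncard
        < unlockedCount ℓ μ (ladderIdx ℓ p)}

/-- `μ` is `ℓ`-regular: no part occurs `ℓ` or more times. -/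
def IsRegular (ℓ : ℕ) (μ : YPartition) : Prop :=
  ∀ a : ℕ, 1 ≤ a → 0 < μ.part (a + (ℓ - 1)) → μ.part (a + (ℓ - 1)) < μ.part a

/-- Removal of a single horizontal or vertical `ℓ`-rim hook. -/
def RemoveHV (ℓ : ℕ) (lam mu : YPartition) : Prop :=
  ∃ S : Set (ℕ × ℕ), IsRimHook ℓ lam S ∧ (HorizontalHook S ∨ VerticalHook S) ∧
    mu.cells = lam.cells \ S

/-- Condition (1): every removable `ℓ`-rim hook is horizontal or vertical. -/
def Cond1 (ℓ : ℕ) (μ : YPartition) : Prop :=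
  ∀ S : Set (ℕ × ℕ), IsRimHook ℓ μ S → HorizontalHook S ∨ VerticalHook S

/-- Condition (2): no vertical (resp. horizontal) `ℓ`-rim hook `R` of `μ` together with an
adjacent horizontal (resp. vertical) `ℓ`-rim hook `S` of `μ \ R` . -/
def Cond2 (ℓ : ℕ) (μ : YPartition) : Prop :=
  ¬ ∃ (R S : Set (ℕ × ℕ)) (ν : YPartition), IsRimHook ℓ μ R ∧ ν.cells = μ.cells \ R ∧
    IsRimHook ℓ ν S ∧ SetsAdjacent R S ∧
    ((VerticalHook R ∧ HorizontalHook S) ∨ (HorizontalHook R ∧ VerticalHook S))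

/-- A generalized `ℓ`-partition: conditions (1) and (2) hold after removing any sequence of
horizontal and vertical `ℓ`-rim hooks (including the empty sequence). -/
def IsGenLPartition (ℓ : ℕ) (lam : YPartition) : Prop :=
  ∀ mu : YPartition, Relation.ReflTransGen (RemoveHV ℓ) lam mu → Cond1 ℓ mu ∧ Cond2 ℓ mu

/-- The `t`-th row (from the top) of the bottom block of the decomposition
`(μ, r, s, ρ, σ)`: the number of values `v ∈ [1, s+1]` whose column block still reaches
row `t`; column block `v` consists of `σ_v·ℓ + (s+1−v)(ℓ−1)` rows of length `≥ v`. -/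
def bottomPart (ℓ s : ℕ) (σ : YPartition) (t : ℕ) : ℕ :=
  ((Finset.Icc 1 (s + 1)).filter fun v => t ≤ σ.part v * ℓ + (s + 1 - v) * (ℓ - 1)).card

/-- The `i`-th part of the partition corresponding to the data `(μ, r, s, ρ, σ)`. -/
def decompPart (ℓ : ℕ) (mu : YPartition) (r s : ℕ) (ρ σ : YPartition) (i : ℕ) : ℕ :=
  if i = 0 then 0
  else if i ≤ r + 1 then s + mu.part 1 + (r + 1 - i) * (ℓ - 1) + ρ.part i * ℓ
  else if i ≤ r + max mu.length 1 then s + mu.part (i - r)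
  else bottomPart ℓ s σ (i - (r + max mu.length 1))

/-- Admissibility of the decomposition data `(μ, r, s, ρ, σ)`. -/
def GoodData (ℓ : ℕ) (mu : YPartition) (r s : ℕ) (ρ σ : YPartition) : Prop :=
  IsCore ℓ mu ∧ mu.part 1 < mu.part 2 + (ℓ - 1) ∧ mu.colLen 1 < mu.colLen 2 + (ℓ - 1) ∧
  ρ.length ≤ r + 1 ∧ σ.length ≤ s + 1 ∧
  (mu.cells = ∅ → ρ.part (r + 1) = 0 ∨ σ.part (s + 1) = 0)

/-- `lam ≈ (μ, r, s, ρ, σ)`. -/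
def Decomposes (ℓ : ℕ) (lam mu : YPartition) (r s : ℕ) (ρ σ : YPartition) : Prop :=
  ∀ i : ℕ, lam.part i = decompPart ℓ mu r s ρ σ i

/-- Removal of a single `ℓ`-rim hook. -/
def RemoveHook (ℓ : ℕ) (lam mu : YPartition) : Prop :=
  ∃ S : Set (ℕ × ℕ), IsRimHook ℓ lam S ∧ mu.cells = lam.cells \ S

/-- `lam` has `ℓ`-core `nu` and `ℓ`-weight `w`. -/
def HasCoreAndWeight (ℓ : ℕ) (lam nu : YPartition) (w : ℕ) : Prop :=
  IsCore ℓ nu ∧ RelIter (RemoveHook ℓ) w lam nu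

/-- An L-partition. -/
def IsLPartition (ℓ : ℕ) (lam : YPartition) : Prop :=
  ¬ ∃ p : ℕ × ℕ, p ∈ lam.cells ∧ ℓ ∣ lam.hook p.1 p.2 ∧
    (lam.arm p.1 p.2 < (ℓ - 1) * lam.leg p.1 p.2 ∨
     lam.leg p.1 p.2 < (ℓ - 1) * lam.arm p.1 p.2)

end YPartition

/-!
Call a *bad pair* the last box `p` of a row together with the first empty position `q` of a
column, lying strictly lower on the ladder of `p`. A box `(a, b)` with `h = ℓ · arm` is exactly
the bad pair `p = (a, λ_a)`, `q = (λ'_b + 1, b)`.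

Adding or removing a box changes one row end and one column hole. If adding the ladder cogood
`i`-box `g` created a bad pair, then either the pair shifted by one row or column was already
bad, or the pair meets an addable `i`-node read after `g`; in that case the bracketing of the
ladder `i`-signature provides a removable `i`-box in between, which completes a bad pair already
present before. Dually, removing the ladder good box creates no bad pair. Hence every node of
`B(Λ₀)^L` is free of bad pairs.

Conversely, in a nonempty partition without bad pairs the last box in ladder order is normal, so
a ladder good box `g` exists. Removing it keeps the partition free of bad pairs, and cancelling
`-+` pairs shows that `g` is the cogood box of the smaller partition; induction on the size gives
that the partition is a node. Finally, in an L-partition a box with `h = ℓ · arm` would have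
`leg = (ℓ - 1) · arm - 1`, violating the L-condition.
-/

namespace YPartition

open Set

section Diagram

variable {P : YPartition} {a b : ℕ}

theorem mem_cells : (a, b) ∈ P.cells ↔ 1 ≤ a ∧ 1 ≤ b ∧ b ≤ P.part a := Iff.rfl

theorem mem_cells_of_le {a' b' : ℕ} (h : (a, b) ∈ P.cells) (ha : 1 ≤ a') (haa : a' ≤ a)
    (hb : 1 ≤ b') (hbb : b' ≤ b) : (a', b') ∈ P.cells :=
  ⟨ha, hb, hbb.trans (h.2.2.trans (P.antitone a' a ha haa))⟩

theorem cells_finite (P : YPartition) : P.cells.Finite := by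
  obtain ⟨N, hN⟩ := P.eventually_zero
  refine ((finite_Icc 1 N).prod (finite_Icc 1 (P.part 1))).subset ?_
  rintro ⟨a, b⟩ ⟨ha, hb, hba : b ≤ P.part a⟩
  have := P.antitone 1 a le_rfl ha
  have : a < N := by
    by_contra h
    have := hN a (by omega)
    omega
  exact ⟨⟨ha, by omega⟩, hb, by omega⟩

theorem eq_emptyP_of_cells_eq_empty (h : P.cells = ∅) : P = emptyP := by
  have hpart : P.part = fun _ => 0 := by
    funext a
    by_contra ha
    have : (a, 1) ∈ P.cells := ⟨Nat.pos_of_ne_zero fun h0 => ha (h0 ▸ P.zero_at_zero), le_rfl,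
      Nat.one_le_iff_ne_zero.mpr ha⟩
    simp [h] at this
  cases P
  simp only at hpart
  subst hpart
  rfl

theorem le_colLen_iff (ha : 1 ≤ a) (hb : 1 ≤ b) : a ≤ P.colLen b ↔ (a, b) ∈ P.cells := by
  rw [colLen, Nat.card_coe_set_eq, mem_cells]
  constructor
  · intro h
    by_contra hab
    have hsub : {c : ℕ | 1 ≤ c ∧ b ≤ P.part c} ⊆ Icc 1 (a - 1) := fun c ⟨hc, hbc⟩ =>
      ⟨hc, by by_contra; have := P.antitone a c ha (by omega); omega⟩
    have := ncard_le_ncard hsub (finite_Icc _ _)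
    rw [ncard_Icc_nat] at this
    omega
  · rintro ⟨-, -, hba⟩
    have hsub : Icc 1 a ⊆ {c : ℕ | 1 ≤ c ∧ b ≤ P.part c} := fun c ⟨hc, hca⟩ =>
      ⟨hc, hba.trans (P.antitone c a hc hca)⟩
    have hfin : {c : ℕ | 1 ≤ c ∧ b ≤ P.part c}.Finite :=
      (P.cells_finite.image Prod.fst).subset fun c ⟨hc, hbc⟩ => ⟨(c, b), ⟨hc, hb, hbc⟩, rfl⟩
    have := ncard_le_ncard hsub hfin
    rw [ncard_Icc_nat] at this
    omega

end Diagram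

def IsRowEnd (P : YPartition) (p : ℕ × ℕ) : Prop := p ∈ P.cells ∧ (p.1, p.2 + 1) ∉ P.cells

def IsColHole (P : YPartition) (q : ℕ × ℕ) : Prop :=
  1 ≤ q.2 ∧ q ∉ P.cells ∧ (q.1 = 1 ∨ (q.1 - 1, q.2) ∈ P.cells)

section RimPositions

variable {P Q : YPartition} {g p q : ℕ × ℕ}

theorem isRowEnd_iff : IsRowEnd P p ↔ 1 ≤ p.1 ∧ 1 ≤ p.2 ∧ P.part p.1 = p.2 := by
  simp only [IsRowEnd, cells, mem_ofPred_eq]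
  omega

theorem IsColHole.one_le_fst (hq : IsColHole P q) : 1 ≤ q.1 := by
  rcases hq.2.2 with h | h
  · omega
  · have := h.1
    omega

theorem isColHole_iff_colLen (hq : 1 ≤ q.2) : IsColHole P q ↔ P.colLen q.2 + 1 = q.1 := by
  obtain ⟨d, b⟩ := q
  simp only at hq ⊢
  constructor
  · intro hhole
    have hd1 : 1 ≤ d := hhole.one_le_fst
    obtain ⟨-, hd, hd'⟩ := hhole
    have h1 := (le_colLen_iff (P := P) hd1 hq).not.mpr hd
    rcases hd' with rfl | hd'
    · omega
    · have := (le_colLen_iff (by have := hd'.1; omega) hq).mpr hd'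
      omega
  · intro h
    refine ⟨hq, fun hd => ?_, ?_⟩
    · have := (le_colLen_iff (by omega) hq).mpr hd
      omega
    · rcases Nat.eq_zero_or_pos (P.colLen b) with h0 | h0
      · exact Or.inl (by omega)
      · right
        rw [← le_colLen_iff (by omega) hq]
        omega

theorem removable_iff : Removable P p ↔ IsRowEnd P p ∧ (p.1 + 1, p.2) ∉ P.cells := by
  obtain ⟨a, b⟩ := p
  simp only [Removable, IsRowEnd, mem_cells]
  have := P.antitone a (a + 1)
  omega

theorem addable_iff : Addable P p ↔ IsColHole P p ∧ (p.2 = 1 ∨ (p.1, p.2 - 1) ∈ P.cells) := by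
  obtain ⟨a, b⟩ := p
  simp only [Addable, IsColHole, mem_cells]
  omega

theorem Removable.isRowEnd (hp : Removable P p) : IsRowEnd P p := (removable_iff.mp hp).1

theorem Removable.isColHole_succ (hp : Removable P p) : IsColHole P (p.1 + 1, p.2) := by
  obtain ⟨⟨hp, -⟩, hbelow⟩ := removable_iff.mp hp
  exact ⟨hp.2.1, hbelow, Or.inr (by simpa using hp)⟩

theorem Addable.isColHole (hp : Addable P p) : IsColHole P p := (addable_iff.mp hp).1

theorem Addable.isRowEnd_pred (hp : Addable P p) (h2 : 2 ≤ p.2) : IsRowEnd P (p.1, p.2 - 1) := by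
  obtain ⟨⟨-, hp, -⟩, hleft⟩ := addable_iff.mp hp
  refine ⟨hleft.resolve_left (by omega), ?_⟩
  rwa [Nat.sub_add_cancel (by omega : 1 ≤ p.2)]

theorem IsRowEnd.of_cells_eq_insert (hQ : Q.cells = insert g P.cells) (hp : IsRowEnd Q p) :
    p = g ∨ IsRowEnd P p := by
  simp only [IsRowEnd, hQ, mem_insert_iff, not_or] at hp
  tauto

theorem IsColHole.of_cells_eq_insert (hQ : Q.cells = insert g P.cells) (hq : IsColHole Q q) :
    q = (g.1 + 1, g.2) ∨ IsColHole P q := by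
  have hq1 := hq.one_le_fst
  obtain ⟨hb, hq, hup⟩ := hq
  rw [hQ, mem_insert_iff, not_or] at hq
  rw [hQ, mem_insert_iff] at hup
  rcases hup with h | h | h
  · exact Or.inr ⟨hb, hq.2, Or.inl h⟩
  · left
    rw [← h]
    exact Prod.ext (by simp only; omega) rfl
  · exact Or.inr ⟨hb, hq.2, Or.inr h⟩

theorem IsRowEnd.of_cells_eq_diff (hQ : Q.cells = P.cells \ {g}) (hp : IsRowEnd Q p) :
    p = (g.1, g.2 - 1) ∨ IsRowEnd P p := by
  obtain ⟨hp, hright⟩ := hp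
  rw [hQ] at hp hright
  by_cases h : (p.1, p.2 + 1) = g
  · left
    rw [← h]
    exact Prod.ext rfl (by simp)
  · exact Or.inr ⟨hp.1, fun hmem => hright ⟨hmem, h⟩⟩

theorem IsColHole.of_cells_eq_diff (hQ : Q.cells = P.cells \ {g}) (hq : IsColHole Q q) :
    q = g ∨ IsColHole P q := by
  obtain ⟨hb, hq, hup⟩ := hq
  rw [hQ] at hq hup
  by_cases h : q = g
  · exact Or.inl h
  · exact Or.inr ⟨hb, fun hmem => hq ⟨hmem, h⟩, hup.imp_right fun hmem => hmem.1⟩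

end RimPositions

section Ladders

variable {ℓ : ℕ} {p q : ℕ × ℕ}

theorem ladderIdx_succ_fst (ℓ : ℕ) (p : ℕ × ℕ) :
    ladderIdx ℓ (p.1 + 1, p.2) = ladderIdx ℓ p + 1 := by
  simp only [ladderIdx]
  omega

theorem ladderIdx_succ_snd (ℓ : ℕ) {p : ℕ × ℕ} (hp : 1 ≤ p.2) :
    ladderIdx ℓ (p.1, p.2 + 1) = ladderIdx ℓ p + (ℓ - 1) := by
  simp only [ladderIdx, Nat.add_sub_cancel]
  rw [← Nat.sub_add_cancel hp, Nat.mul_succ, Nat.add_sub_cancel]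
  omega

theorem ladderIdx_pred_fst (ℓ : ℕ) {p : ℕ × ℕ} (hp : 1 ≤ p.1) :
    ladderIdx ℓ (p.1 - 1, p.2) + 1 = ladderIdx ℓ p := by
  simp only [ladderIdx]
  omega

theorem ladderIdx_pred_snd (ℓ : ℕ) {p : ℕ × ℕ} (hp : 2 ≤ p.2) :
    ladderIdx ℓ (p.1, p.2 - 1) + (ℓ - 1) = ladderIdx ℓ p := by
  have := ladderIdx_succ_snd ℓ (p := (p.1, p.2 - 1)) (by simp only; omega)
  simp only [Nat.sub_add_cancel (by omega : 1 ≤ p.2)] at this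
  exact this.symm

theorem snd_lt_of_ladderIdx_eq (h : ladderIdx ℓ p = ladderIdx ℓ q) (hlt : p.1 < q.1) :
    q.2 < p.2 := by
  by_contra hle
  have : (ℓ - 1) * (p.2 - 1) ≤ (ℓ - 1) * (q.2 - 1) := Nat.mul_le_mul_left _ (by omega)
  simp only [ladderIdx] at h
  omega

theorem eq_of_ladderIdx_eq (hℓ : 2 ≤ ℓ) (hp : 1 ≤ p.2) (hq : 1 ≤ q.2)
    (h : ladderIdx ℓ p = ladderIdx ℓ q) (h1 : p.1 = q.1) : p = q := by
  simp only [ladderIdx, h1, Nat.add_left_cancel_iff] at h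
  exact Prod.ext h1 (by have := Nat.eq_of_mul_eq_mul_left (by omega) h; omega)

theorem exists_eq_add_of_ladderIdx_eq (h : ladderIdx ℓ p = ladderIdx ℓ q) (hlt : p.1 < q.1)
    (hq : 1 ≤ q.2) : ∃ j, 1 ≤ j ∧ q.1 = p.1 + (ℓ - 1) * j ∧ p.2 = q.2 + j := by
  have hgt := snd_lt_of_ladderIdx_eq h hlt
  refine ⟨p.2 - q.2, by omega, ?_, by omega⟩
  simp only [ladderIdx] at h
  rw [show p.2 - 1 = (q.2 - 1) + (p.2 - q.2) by omega, Nat.mul_add] at h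
  omega

end Ladders

section Residues

variable {ℓ : ℕ} {p q : ℕ × ℕ}

theorem res_lt (hℓ : 1 ≤ ℓ) (p : ℕ × ℕ) : res ℓ p < ℓ := by
  have := Int.emod_lt_of_pos ((p.2 : ℤ) - p.1) (by omega : (0 : ℤ) < ℓ)
  simp only [res]
  omega

theorem res_eq_iff_dvd (hℓ : 1 ≤ ℓ) :
    res ℓ p = res ℓ q ↔ (ℓ : ℤ) ∣ ((q.2 : ℤ) - q.1) - ((p.2 : ℤ) - p.1) := by
  have e1 := Int.emod_nonneg ((p.2 : ℤ) - p.1) (by omega : (ℓ : ℤ) ≠ 0)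
  have e2 := Int.emod_nonneg ((q.2 : ℤ) - q.1) (by omega : (ℓ : ℤ) ≠ 0)
  rw [← Int.modEq_iff_dvd, Int.ModEq, res, res]
  omega

theorem res_eq_iff_dvd_ladderIdx (hℓ : 1 ≤ ℓ) (hp : 1 ≤ p.2) (hq : 1 ≤ q.2) :
    res ℓ p = res ℓ q ↔ (ℓ : ℤ) ∣ (ladderIdx ℓ q : ℤ) - ladderIdx ℓ p := by
  have key : (ladderIdx ℓ q : ℤ) - ladderIdx ℓ p =
      ℓ * ((q.2 : ℤ) - p.2) - (((q.2 : ℤ) - q.1) - ((p.2 : ℤ) - p.1)) := by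
    simp only [ladderIdx]
    push_cast [Nat.cast_sub hℓ, Nat.cast_sub hp, Nat.cast_sub hq]
    ring
  rw [res_eq_iff_dvd hℓ, key, dvd_sub_right (dvd_mul_right _ _)]

theorem res_eq_of_ladderIdx_eq (hℓ : 1 ≤ ℓ) (hp : 1 ≤ p.2) (hq : 1 ≤ q.2)
    (h : ladderIdx ℓ p = ladderIdx ℓ q) : res ℓ p = res ℓ q := by
  rw [res_eq_iff_dvd_ladderIdx hℓ hp hq, h, sub_self]
  exact dvd_zero _

theorem res_eq_of_ladderIdx_eq_add (hℓ : 1 ≤ ℓ) (hp : 1 ≤ p.2) (hq : 1 ≤ q.2)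
    (h : ladderIdx ℓ q = ladderIdx ℓ p + ℓ) : res ℓ p = res ℓ q := by
  rw [res_eq_iff_dvd_ladderIdx hℓ hp hq, h]
  exact ⟨1, by push_cast; ring⟩

theorem ladderIdx_eq_of_res_eq (hℓ : 1 ≤ ℓ) (hp : 1 ≤ p.2) (hq : 1 ≤ q.2)
    (h : res ℓ p = res ℓ q) (hle : ladderIdx ℓ p ≤ ladderIdx ℓ q)
    (hlt : ladderIdx ℓ q < ladderIdx ℓ p + ℓ) : ladderIdx ℓ p = ladderIdx ℓ q := by
  rw [res_eq_iff_dvd_ladderIdx hℓ hp hq] at h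
  have := Int.eq_zero_of_dvd_of_nonneg_of_lt (by omega) (by omega) h
  omega

theorem res_ne_of_boxAdjacent (hℓ : 2 ≤ ℓ) (h : BoxAdjacent p q) : res ℓ p ≠ res ℓ q := by
  rw [Ne, res_eq_iff_dvd (by omega)]
  intro hdvd
  have hone : (ℓ : ℤ) ∣ 1 := by
    unfold BoxAdjacent at h
    rcases (by omega : ((q.2 : ℤ) - q.1) - ((p.2 : ℤ) - p.1) = 1 ∨
        ((q.2 : ℤ) - q.1) - ((p.2 : ℤ) - p.1) = -1) with h1 | h1 <;> rw [h1] at hdvd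
    · exact hdvd
    · exact dvd_neg.mp hdvd
  have := Int.le_of_dvd one_pos hone
  omega

end Residues

def HasBadPair (ℓ : ℕ) (P : YPartition) : Prop :=
  ∃ p q, IsRowEnd P p ∧ IsColHole P q ∧ ladderIdx ℓ p = ladderIdx ℓ q ∧ p.1 < q.1

theorem sub_one_mul_add_self {ℓ : ℕ} (hℓ : 1 ≤ ℓ) (m : ℕ) : (ℓ - 1) * m + m = ℓ * m := by
  rw [← Nat.succ_mul, Nat.succ_eq_add_one, Nat.sub_add_cancel hℓ]

theorem hasBadPair_iff_exists_hook_eq {ℓ : ℕ} {P : YPartition} :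
    HasBadPair ℓ P ↔ ∃ p ∈ P.cells, P.hook p.1 p.2 = ℓ * P.arm p.1 p.2 := by
  constructor
  · rintro ⟨p, q, hp, hq, hidx, hlt⟩
    obtain ⟨j, hj, hq1, hp2⟩ := exists_eq_add_of_ladderIdx_eq hidx hlt hq.1
    have hℓ : 1 ≤ ℓ - 1 := by
      by_contra h0
      rw [show ℓ - 1 = 0 by omega, zero_mul] at hq1
      omega
    have hcol := (isColHole_iff_colLen hq.1).mp hq
    obtain ⟨hp1, -, hpart⟩ := isRowEnd_iff.mp hp
    refine ⟨(p.1, q.2), mem_cells_of_le hp.1 hp1 le_rfl hq.1 (by omega), ?_⟩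
    have harm : P.part p.1 - q.2 = j := by omega
    have := sub_one_mul_add_self (by omega : 1 ≤ ℓ) j
    simp only [hook, arm, harm]
    omega
  · rintro ⟨⟨a, b⟩, ⟨ha, hb, hba⟩, heq⟩
    simp only [hook, arm] at heq hba
    obtain ⟨m, hm_def⟩ : ∃ m, P.part a = b + m := ⟨P.part a - b, by omega⟩
    rw [hm_def, Nat.add_sub_cancel_left] at heq
    have hm : 1 ≤ m := by
      by_contra h0
      simp [show m = 0 by omega] at heq
    have hℓ : 1 ≤ ℓ := by
      by_contra h0
      simp [show ℓ = 0 by omega] at heq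
    have hcol : a ≤ P.colLen b := (le_colLen_iff ha hb).mpr ⟨ha, hb, hba⟩
    have := sub_one_mul_add_self hℓ m
    refine ⟨(a, P.part a), (P.colLen b + 1, b), isRowEnd_iff.mpr ⟨ha, by omega, rfl⟩,
      (isColHole_iff_colLen (q := (P.colLen b + 1, b)) hb).mpr rfl, ?_, show a < _ by omega⟩
    simp only [ladderIdx, hm_def, show b + m - 1 = (b - 1) + m by omega, Nat.mul_add]
    omega

/- A signature is given by the set `R` of removable (`-`) and `A` of addable (`+`) marks, read in
the order pulled back from a linear order along a key `f` that is injective on the marks. The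
ladder reading order is the case `f = ladderKey ℓ`. -/
section Bracket

variable {α : Type*} {f : ℕ × ℕ → α} {R A S M : Set (ℕ × ℕ)} {p q r : ℕ × ℕ} {I J : Set α}

def markCount (f : ℕ × ℕ → α) (S : Set (ℕ × ℕ)) (I : Set α) : ℕ := (S ∩ f ⁻¹' I).ncard

theorem markCount_union (hS : S.Finite) (hIJ : Disjoint I J) :
    markCount f S (I ∪ J) = markCount f S I + markCount f S J := by
  rw [markCount, preimage_union, inter_union_distrib_left]
  exact ncard_union_eq ((hIJ.preimage f).mono inter_subset_right inter_subset_right)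
    (hS.inter_of_left _) (hS.inter_of_left _)

theorem markCount_pos (hS : S.Finite) (hp : p ∈ S) (hI : f p ∈ I) : 0 < markCount f S I :=
  (ncard_pos (hS.inter_of_left _)).mpr ⟨p, hp, hI⟩

theorem exists_mem_of_markCount_pos (h : 0 < markCount f S I) : ∃ s ∈ S, f s ∈ I := by
  obtain ⟨s, hs, hI⟩ := nonempty_of_ncard_ne_zero h.ne'
  exact ⟨s, hs, hI⟩

theorem markCount_sdiff_singleton (hS : S.Finite) (hp : p ∈ S) (hI : f p ∈ I) :
    markCount f (S \ {p}) I + 1 = markCount f S I := by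
  rw [markCount, markCount, ← inter_sdiff_right_comm]
  exact ncard_sdiff_singleton_add_one ⟨hp, hI⟩ (hS.inter_of_left _)

theorem markCount_sdiff_singleton_of_notMem (hI : f p ∉ I) :
    markCount f (S \ {p}) I = markCount f S I := by
  rw [markCount, markCount, ← inter_sdiff_right_comm, sdiff_singleton_eq_self fun h => hI h.2]

theorem markCount_union_singleton (hS : S.Finite) (hp : p ∉ S) (hI : f p ∈ I) :
    markCount f (S ∪ {p}) I = markCount f S I + 1 := by
  rw [markCount, markCount, union_singleton, insert_inter_of_mem (show p ∈ f ⁻¹' I from hI)]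
  exact ncard_insert_of_notMem (fun h => hp h.1) (hS.inter_of_left _)

theorem markCount_union_singleton_of_notMem (hI : f p ∉ I) :
    markCount f (S ∪ {p}) I = markCount f S I := by
  rw [markCount, markCount, union_singleton, insert_inter_of_notMem (show p ∉ f ⁻¹' I from hI)]

variable [LinearOrder α]

theorem normalIn_iff : NormalIn (InvImage (· ≤ ·) f) R A p ↔
    p ∈ R ∧ ∀ q ∈ R ∪ A, f p ≤ f q →
      markCount f A (Icc (f p) (f q)) < markCount f R (Icc (f p) (f q)) := Iff.rfl

theorem conormalIn_iff : ConormalIn (InvImage (· ≤ ·) f) R A q ↔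
    q ∈ A ∧ ∀ p ∈ R ∪ A, f p ≤ f q →
      markCount f R (Icc (f p) (f q)) < markCount f A (Icc (f p) (f q)) := Iff.rfl

theorem markCount_Icc_eq_add_Ioc (hS : S.Finite) {a b c : α} (hab : a ≤ b) (hbc : b ≤ c) :
    markCount f S (Icc a c) = markCount f S (Icc a b) + markCount f S (Ioc b c) := by
  rw [← Icc_union_Ioc_eq_Icc hab hbc,
    markCount_union hS (disjoint_left.mpr fun _ hx hx' => not_lt.mpr hx.2 hx'.1)]

theorem markCount_Icc_eq_Ico_add (hS : S.Finite) {a b c : α} (hab : a ≤ b) (hbc : b ≤ c) :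
    markCount f S (Icc a c) = markCount f S (Ico a b) + markCount f S (Icc b c) := by
  rw [← Ico_union_Icc_eq_Icc hab hbc,
    markCount_union hS (disjoint_left.mpr fun _ hx hx' => not_lt.mpr hx'.1 hx.2)]

theorem markCount_Icc_self_of_mem (hinj : InjOn f S) (hp : p ∈ S) :
    markCount f S (Icc (f p) (f p)) = 1 := by
  rw [markCount, Icc_self, ncard_eq_one]
  refine ⟨p, Set.ext fun s => ⟨fun ⟨hs, hfs⟩ => hinj hs hp hfs, ?_⟩⟩
  rintro rfl
  exact ⟨hp, rfl⟩

theorem markCount_Icc_self_of_notMem (hinj : InjOn f (insert p S)) (hp : p ∉ S) :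
    markCount f S (Icc (f p) (f p)) = 0 := by
  have : S ∩ f ⁻¹' Icc (f p) (f p) = ∅ := by
    refine eq_empty_of_forall_notMem fun s ⟨hs, hfs⟩ => hp ?_
    rw [Icc_self] at hfs
    rwa [← hinj (mem_insert_of_mem _ hs) (mem_insert _ _) hfs]
  rw [markCount, this, ncard_empty]

theorem exists_first_mark (hM : M.Finite) (hp : p ∈ M) {u : α} (hu : u < f p) :
    ∃ r ∈ M, u < f r ∧ f r ≤ f p ∧
      ∀ S ⊆ M, markCount f S (Ioc u (f p)) = markCount f S (Icc (f r) (f p)) := by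
  obtain ⟨r, ⟨hrM, hru, hrp⟩, hmin⟩ :=
    exists_min_image (M ∩ f ⁻¹' Ioc u (f p)) f (hM.inter_of_left _) ⟨p, hp, hu, le_rfl⟩
  refine ⟨r, hrM, hru, hrp, fun S hSM => congrArg ncard (Set.ext fun s => ?_)⟩
  exact ⟨fun ⟨hs, h1, h2⟩ => ⟨hs, hmin s ⟨hSM hs, h1, h2⟩, h2⟩,
    fun ⟨hs, h1, h2⟩ => ⟨hs, hru.trans_le h1, h2⟩⟩

theorem ConormalIn.exists_mem_Ioc (hR : R.Finite) (hA : A.Finite)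
    (hp : ConormalIn (InvImage (· ≤ ·) f) R A p) (hq : q ∈ A) (hpq : f p < f q)
    (hnq : ¬ ConormalIn (InvImage (· ≤ ·) f) R A q) : ∃ s ∈ R, f s ∈ Ioc (f p) (f q) := by
  rw [conormalIn_iff] at hp hnq
  push Not at hnq
  obtain ⟨r, hr, hrq, hcount⟩ := hnq hq
  rcases le_or_gt (f r) (f p) with hrp | hpr
  · have := hp.2 r hr hrp
    rw [markCount_Icc_eq_add_Ioc hR hrp hpq.le, markCount_Icc_eq_add_Ioc hA hrp hpq.le] at hcount
    exact exists_mem_of_markCount_pos (by omega)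
  · have := markCount_pos (I := Icc (f r) (f q)) hA hq ⟨hrq, le_rfl⟩
    obtain ⟨s, hs, hs1, hs2⟩ := exists_mem_of_markCount_pos (lt_of_lt_of_le this hcount)
    exact ⟨s, hs, hpr.trans_le hs1, hs2⟩

theorem NormalIn.exists_mem_Ico (hR : R.Finite) (hA : A.Finite)
    (hp : NormalIn (InvImage (· ≤ ·) f) R A p) (hr : r ∈ R) (hrp : f r < f p)
    (hnr : ¬ NormalIn (InvImage (· ≤ ·) f) R A r) : ∃ t ∈ A, f t ∈ Ico (f r) (f p) := by
  rw [normalIn_iff] at hp hnr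
  push Not at hnr
  obtain ⟨q, hq, hrq, hcount⟩ := hnr hr
  rcases le_or_gt (f p) (f q) with hpq | hqp
  · have := hp.2 q hq hpq
    rw [markCount_Icc_eq_Ico_add hR hrp.le hpq, markCount_Icc_eq_Ico_add hA hrp.le hpq] at hcount
    exact exists_mem_of_markCount_pos (by omega)
  · have := markCount_pos (I := Icc (f r) (f q)) hR hr ⟨le_rfl, hrq⟩
    obtain ⟨t, ht, ht1, ht2⟩ := exists_mem_of_markCount_pos (lt_of_lt_of_le this hcount)
    exact ⟨t, ht, ht1, ht2.trans_lt hqp⟩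

theorem normalIn_of_forall_le (hinj : InjOn f (R ∪ A)) (hp : p ∈ R) (hpA : p ∉ A)
    (hmax : ∀ q ∈ R ∪ A, f q ≤ f p) : NormalIn (InvImage (· ≤ ·) f) R A p := by
  refine normalIn_iff.mpr ⟨hp, fun q hq hpq => ?_⟩
  rw [show f q = f p from le_antisymm (hmax q hq) hpq,
    markCount_Icc_self_of_mem (hinj.mono subset_union_left) hp,
    markCount_Icc_self_of_notMem (hinj.mono (insert_subset (Or.inl hp) subset_union_right)) hpA]
  exact one_pos

theorem normalIn_of_excess (hR : R.Finite) (hA : A.Finite) (hinj : InjOn f (R ∪ A))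
    (hp : NormalIn (InvImage (· ≤ ·) f) R A p) (hr : r ∈ R ∪ A) (hrp : f r ≤ f p)
    (htwo : markCount f A (Icc (f r) (f p)) + 2 ≤ markCount f R (Icc (f r) (f p)))
    (hafter : ∀ u, f r ≤ u → u < f p →
      markCount f R (Ioc u (f p)) ≤ markCount f A (Ioc u (f p)) + 1) :
    NormalIn (InvImage (· ≤ ·) f) R A r := by
  rw [normalIn_iff] at hp ⊢
  have key : ∀ q ∈ R ∪ A, f r ≤ f q →
      markCount f A (Icc (f r) (f q)) < markCount f R (Icc (f r) (f q)) := by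
    intro q hq hrq
    rcases le_or_gt (f p) (f q) with hpq | hqp
    · have := hp.2 q hq hpq
      rw [markCount_Icc_eq_add_Ioc hR hrp hpq, markCount_Icc_eq_add_Ioc hA hrp hpq]
      rw [markCount_Icc_eq_add_Ioc hR le_rfl hpq, markCount_Icc_eq_add_Ioc hA le_rfl hpq,
        markCount_Icc_self_of_mem (hinj.mono subset_union_left) hp.1] at this
      omega
    · have := hafter (f q) hrq hqp
      rw [markCount_Icc_eq_add_Ioc hR hrq hqp.le, markCount_Icc_eq_add_Ioc hA hrq hqp.le] at htwo
      omega
  obtain ⟨s, hs, hfs⟩ := exists_mem_of_markCount_pos (Nat.zero_lt_of_lt (key r hr le_rfl))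
  obtain rfl : s = r := hinj (subset_union_left hs) hr (le_antisymm hfs.2 hfs.1)
  exact ⟨hs, key⟩

-- The rightmost `r` for which `[r, p]` has at least two more `-` than `+` would itself be normal.
theorem markCount_le_add_one_of_good (hR : R.Finite) (hA : A.Finite) (hinj : InjOn f (R ∪ A))
    (hp : NormalIn (InvImage (· ≤ ·) f) R A p)
    (hmin : ∀ q, NormalIn (InvImage (· ≤ ·) f) R A q → f p ≤ f q)
    (hr : r ∈ R ∪ A) (hrp : f r ≤ f p) :
    markCount f R (Icc (f r) (f p)) ≤ markCount f A (Icc (f r) (f p)) + 1 := by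
  by_contra hc
  let Bad := {r ∈ R ∪ A | f r ≤ f p ∧
    markCount f A (Icc (f r) (f p)) + 2 ≤ markCount f R (Icc (f r) (f p))}
  obtain ⟨r₀, ⟨hr₀, hr₀p, hr₀two⟩, hmax⟩ := exists_max_image Bad f
    ((hR.union hA).subset fun _ h => h.1) ⟨r, hr, hrp, by omega⟩
  have hpM : p ∈ R ∪ A := Or.inl hp.1
  have hr₀norm : NormalIn (InvImage (· ≤ ·) f) R A r₀ := by
    refine normalIn_of_excess hR hA hinj hp hr₀ hr₀p hr₀two fun u hu hup => ?_
    obtain ⟨r', hr', hur', hr'p, hcount⟩ := exists_first_mark (hR.union hA) hpM hup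
    rw [hcount R subset_union_left, hcount A subset_union_right]
    by_contra hc'
    exact absurd (hmax r' ⟨hr', hr'p, by omega⟩) (not_le.mpr (hu.trans_lt hur'))
  obtain rfl : r₀ = p := hinj hr₀ hpM (le_antisymm hr₀p (hmin r₀ hr₀norm))
  rw [markCount_Icc_self_of_mem (hinj.mono subset_union_left) hp.1] at hr₀two
  omega

theorem NormalIn.notMem_right (hA : A.Finite) (hinj : InjOn f (R ∪ A))
    (hp : NormalIn (InvImage (· ≤ ·) f) R A p) : p ∉ A := fun hpA => by
  have h := (normalIn_iff.mp hp).2 p (Or.inl hp.1) le_rfl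
  have := markCount_pos (I := Icc (f p) (f p)) hA hpA ⟨le_rfl, le_rfl⟩
  rw [markCount_Icc_self_of_mem (hinj.mono subset_union_left) hp.1] at h
  omega

theorem conormalIn_of_good (hR : R.Finite) (hA : A.Finite) (hinj : InjOn f (R ∪ A))
    (hp : NormalIn (InvImage (· ≤ ·) f) R A p)
    (hmin : ∀ q, NormalIn (InvImage (· ≤ ·) f) R A q → f p ≤ f q) :
    ConormalIn (InvImage (· ≤ ·) f) (R \ {p}) (A ∪ {p}) p := by
  refine conormalIn_iff.mpr ⟨Or.inr rfl, fun r hr hrp => ?_⟩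
  have hrM : r ∈ R ∪ A := by
    rcases hr with h | h | rfl
    exacts [Or.inl h.1, Or.inr h, Or.inl hp.1]
  have hpI : f p ∈ Icc (f r) (f p) := ⟨hrp, le_rfl⟩
  have := markCount_le_add_one_of_good hR hA hinj hp hmin hrM hrp
  have := markCount_sdiff_singleton hR hp.1 hpI
  rw [markCount_union_singleton hA (hp.notMem_right hA hinj) hpI]
  omega

theorem le_of_conormalIn_of_normalIn (hR : R.Finite) (hA : A.Finite) (hinj : InjOn f (R ∪ A))
    (hp : NormalIn (InvImage (· ≤ ·) f) R A p)
    (hq : ConormalIn (InvImage (· ≤ ·) f) (R \ {p}) (A ∪ {p}) q) : f q ≤ f p := by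
  by_contra hpq
  push Not at hpq
  rw [conormalIn_iff] at hq
  have hqA : q ∈ A := hq.1.resolve_right fun h => hpq.ne' (congrArg f h)
  obtain ⟨r, hr, hpr, hrq, hcount⟩ := exists_first_mark (hR.union hA) (Or.inr hqA) hpq
  have hr' : r ∈ (R \ {p}) ∪ (A ∪ {p}) := by
    rcases hr with h | h
    · exact Or.inl ⟨h, fun he => hpr.ne' (congrArg f he)⟩
    · exact Or.inr (Or.inl h)
  have hpI : f p ∉ Icc (f r) (f q) := fun h => not_le.mpr hpr h.1
  have h1 := hq.2 r hr' hrq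
  rw [markCount_sdiff_singleton_of_notMem hpI, markCount_union_singleton_of_notMem hpI] at h1
  have h2 := (normalIn_iff.mp hp).2 q (Or.inr hqA) hpq.le
  rw [markCount_Icc_eq_add_Ioc hR le_rfl hpq.le, markCount_Icc_eq_add_Ioc hA le_rfl hpq.le,
    hcount R subset_union_left, hcount A subset_union_right,
    markCount_Icc_self_of_mem (hinj.mono subset_union_left) hp.1] at h2
  omega

end Bracket

section LadderSignature

variable {ℓ i : ℕ} {P Q : YPartition} {g p q s t : ℕ × ℕ}

def ladderKey (ℓ : ℕ) (p : ℕ × ℕ) : ℕ ×ₗ ℕ := toLex (ladderIdx ℓ p, p.1)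

theorem ladderLE_iff : LadderLE ℓ p q ↔ ladderKey ℓ p ≤ ladderKey ℓ q := by
  rw [ladderKey, ladderKey, Prod.Lex.le_iff]
  rfl

theorem ladderLT_iff : LadderLT ℓ p q ↔ ladderKey ℓ p < ladderKey ℓ q := by
  rw [ladderKey, ladderKey, Prod.Lex.lt_iff]
  rfl

theorem ladderLE_eq : LadderLE ℓ = InvImage (· ≤ ·) (ladderKey ℓ) := by
  funext p q
  exact propext ladderLE_iff

theorem removableRes_finite : (RemovableRes ℓ i P).Finite :=
  P.cells_finite.subset fun _ hs => (removable_iff.mp hs.1).1.1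

theorem addableRes_finite : (AddableRes ℓ i P).Finite := by
  obtain ⟨N, hN⟩ := P.eventually_zero
  refine ((finite_Icc 1 (N + 1)).prod (finite_Icc 1 (P.part 1 + 1))).subset ?_
  rintro ⟨a, b⟩ ⟨⟨ha, hb, hup⟩, -⟩
  simp only at ha hb hup
  have := P.antitone 1 a le_rfl ha
  have : a ≤ N + 1 := by
    by_contra h
    have := hN (a - 1) (by omega)
    omega
  exact ⟨⟨ha, this⟩, by omega, by omega⟩

theorem one_le_snd_of_mem_marks (hs : s ∈ RemovableRes ℓ i P ∪ AddableRes ℓ i P) : 1 ≤ s.2 := by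
  rcases hs with ⟨⟨-, h, h'⟩, -⟩ | ⟨⟨-, h, -⟩, -⟩ <;> omega

theorem ladderKey_injOn_marks (hℓ : 2 ≤ ℓ) :
    InjOn (ladderKey ℓ) (RemovableRes ℓ i P ∪ AddableRes ℓ i P) := fun p hp q hq h => by
  simp only [ladderKey, EmbeddingLike.apply_eq_iff_eq, Prod.mk.injEq] at h
  exact eq_of_ladderIdx_eq hℓ (one_le_snd_of_mem_marks hp) (one_le_snd_of_mem_marks hq) h.1 h.2

theorem LadderCogood.mem_addableRes (hg : LadderCogood ℓ i P g) : g ∈ AddableRes ℓ i P :=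
  hg.1.1

theorem LadderGood.mem_removableRes (hg : LadderGood ℓ i P g) : g ∈ RemovableRes ℓ i P := hg.1.1

theorem LadderCogood.exists_removable (hg : LadderCogood ℓ i P g)
    (ht : t ∈ AddableRes ℓ i P) (hgt : LadderLT ℓ g t) :
    ∃ s ∈ RemovableRes ℓ i P, LadderLT ℓ g s ∧ LadderLE ℓ s t := by
  obtain ⟨hcon, hmax⟩ := hg
  rw [ladderLT_iff] at hgt
  rw [LadderConormal, ladderLE_eq] at hcon
  have hnt : ¬ ConormalIn (InvImage (· ≤ ·) (ladderKey ℓ)) (RemovableRes ℓ i P)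
      (AddableRes ℓ i P) t := fun htc =>
    not_le.mpr hgt (ladderLE_iff.mp (hmax t (by rwa [LadderConormal, ladderLE_eq])))
  obtain ⟨s, hs, hgs, hst⟩ :=
    hcon.exists_mem_Ioc removableRes_finite addableRes_finite ht hgt hnt
  exact ⟨s, hs, ladderLT_iff.mpr hgs, ladderLE_iff.mpr hst⟩

theorem LadderGood.exists_addable (hg : LadderGood ℓ i P g)
    (hs : s ∈ RemovableRes ℓ i P) (hsg : LadderLT ℓ s g) :
    ∃ t ∈ AddableRes ℓ i P, LadderLE ℓ s t ∧ LadderLT ℓ t g := by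
  obtain ⟨hnorm, hmin⟩ := hg
  rw [ladderLT_iff] at hsg
  rw [LadderNormal, ladderLE_eq] at hnorm
  have hns : ¬ NormalIn (InvImage (· ≤ ·) (ladderKey ℓ)) (RemovableRes ℓ i P)
      (AddableRes ℓ i P) s := fun hsn =>
    not_le.mpr hsg (ladderLE_iff.mp (hmin s (by rwa [LadderNormal, ladderLE_eq])))
  obtain ⟨t, ht, hst, htg⟩ :=
    hnorm.exists_mem_Ico removableRes_finite addableRes_finite hs hsg hns
  exact ⟨t, ht, ladderLE_iff.mpr hst, ladderLT_iff.mpr htg⟩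

theorem exists_ladderGood (hp : LadderNormal ℓ i P p) : ∃ g, LadderGood ℓ i P g := by
  obtain ⟨g, hg, hmin⟩ := exists_min_image {q | LadderNormal ℓ i P q} (ladderKey ℓ)
    (removableRes_finite.subset fun _ hq => hq.1) ⟨p, hp⟩
  exact ⟨g, hg, fun q hq => ladderLE_iff.mpr (hmin q hq)⟩

theorem removableRes_of_cells_eq_diff (hℓ : 2 ≤ ℓ) (hQ : Q.cells = P.cells \ {g}) :
    RemovableRes ℓ (res ℓ g) Q = RemovableRes ℓ (res ℓ g) P \ {g} := by
  ext s
  simp only [RemovableRes, mem_ofPred_eq, mem_sdiff, mem_singleton_iff, removable_iff,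
    IsRowEnd, hQ]
  by_cases hres : res ℓ s = res ℓ g
  · have hright : (s.1, s.2 + 1) ≠ g := fun h => res_ne_of_boxAdjacent hℓ
      (p := s) (q := (s.1, s.2 + 1)) (Or.inl ⟨rfl, Or.inl rfl⟩) (by rw [h]; exact hres)
    have hdown : (s.1 + 1, s.2) ≠ g := fun h => res_ne_of_boxAdjacent hℓ
      (p := s) (q := (s.1 + 1, s.2)) (Or.inr ⟨rfl, Or.inl rfl⟩) (by rw [h]; exact hres)
    simp only [hres, hright, hdown, and_true, not_and, not_not]
    tauto
  · simp only [hres, and_false, false_and]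

theorem addable_of_cells_eq_diff (hg : g ∈ P.cells) (hQ : Q.cells = P.cells \ {g}) :
    Addable Q g := by
  obtain ⟨a, b⟩ := g
  obtain ⟨ha : 1 ≤ a, hb : 1 ≤ b, hba : b ≤ P.part a⟩ := hg
  have := P.antitone (a - 1) a
  simp only [addable_iff, IsColHole, hQ, mem_sdiff, mem_singleton_iff, Prod.ext_iff, mem_cells,
    and_true, true_and, not_true_eq_false, and_false, not_false_eq_true]
  omega

theorem addableRes_of_cells_eq_diff (hℓ : 2 ≤ ℓ) (hg : g ∈ P.cells)
    (hQ : Q.cells = P.cells \ {g}) :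
    AddableRes ℓ (res ℓ g) Q = AddableRes ℓ (res ℓ g) P ∪ {g} := by
  ext t
  by_cases htg : t = g
  · rw [htg]
    exact iff_of_true ⟨addable_of_cells_eq_diff hg hQ, rfl⟩ (Or.inr rfl)
  simp only [AddableRes, mem_ofPred_eq, mem_union, mem_singleton_iff, addable_iff, IsColHole,
    hQ, mem_sdiff]
  by_cases hres : res ℓ t = res ℓ g
  · have hup : (t.1 - 1, t.2) ∈ P.cells → (t.1 - 1, t.2) ≠ g := fun hmem h =>
      res_ne_of_boxAdjacent hℓ (p := (t.1 - 1, t.2)) (q := t)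
        (Or.inr ⟨rfl, Or.inl (by have := hmem.1; simp only at this ⊢; omega)⟩)
        (by rw [h]; exact hres.symm)
    have hleft : (t.1, t.2 - 1) ∈ P.cells → (t.1, t.2 - 1) ≠ g := fun hmem h =>
      res_ne_of_boxAdjacent hℓ (p := (t.1, t.2 - 1)) (q := t)
        (Or.inl ⟨rfl, Or.inl (by have := hmem.2.1; simp only at this ⊢; omega)⟩)
        (by rw [h]; exact hres.symm)
    simp only [htg, hres, or_false, and_true]
    tauto
  · simp only [hres, htg, and_false, or_false]

theorem LadderGood.ladderCogood_of_cells_eq_diff (hℓ : 2 ≤ ℓ) (hg : LadderGood ℓ (res ℓ g) P g)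
    (hQ : Q.cells = P.cells \ {g}) : LadderCogood ℓ (res ℓ g) Q g := by
  have hgP : g ∈ P.cells := hg.mem_removableRes.1.isRowEnd.1
  obtain ⟨hnorm, hmin⟩ := hg
  rw [LadderNormal, ladderLE_eq] at hnorm
  have hmin' : ∀ q, NormalIn (InvImage (· ≤ ·) (ladderKey ℓ)) (RemovableRes ℓ (res ℓ g) P)
      (AddableRes ℓ (res ℓ g) P) q → ladderKey ℓ g ≤ ladderKey ℓ q := fun q hq =>
    ladderLE_iff.mp (hmin q (by rwa [LadderNormal, ladderLE_eq]))
  unfold LadderCogood LadderConormal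
  rw [ladderLE_eq, removableRes_of_cells_eq_diff hℓ hQ, addableRes_of_cells_eq_diff hℓ hgP hQ]
  exact ⟨conormalIn_of_good removableRes_finite addableRes_finite (ladderKey_injOn_marks hℓ)
      hnorm hmin',
    fun q hq => le_of_conormalIn_of_normalIn removableRes_finite addableRes_finite
      (ladderKey_injOn_marks hℓ) hnorm hq⟩

end LadderSignature

section Preservation

variable {ℓ : ℕ} {P Q : YPartition} {g p q : ℕ × ℕ}

theorem IsRowEnd.hasBadPair (hℓ : 2 ≤ ℓ) (hp : IsRowEnd P p) (hq : IsColHole P q)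
    (hidx : ladderIdx ℓ p = ladderIdx ℓ q) (hle : p.1 ≤ q.1) : HasBadPair ℓ P :=
  ⟨p, q, hp, hq, hidx, lt_of_le_of_ne hle fun h =>
    hq.2.1 (eq_of_ladderIdx_eq hℓ hp.1.2.1 hq.1 hidx h ▸ hp.1)⟩

/- If `q` is addable, the cogood box `g` forces a removable box between `g` and `q` on their
ladder; otherwise the pair moved one column to the left is bad. -/
theorem hasBadPair_of_ladderCogood_of_isColHole (hℓ : 2 ≤ ℓ) (hg : LadderCogood ℓ (res ℓ g) P g)
    (hq : IsColHole P q) (hidx : ladderIdx ℓ g = ladderIdx ℓ q) (hlt : g.1 < q.1) :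
    HasBadPair ℓ P := by
  have hgA : Addable P g := hg.mem_addableRes.1
  have hg2 : 1 ≤ g.2 := hgA.isColHole.1
  by_cases hleft : q.2 = 1 ∨ (q.1, q.2 - 1) ∈ P.cells
  · have hqA : q ∈ AddableRes ℓ (res ℓ g) P :=
      ⟨addable_iff.mpr ⟨hq, hleft⟩, (res_eq_of_ladderIdx_eq (by omega) hg2 hq.1 hidx).symm⟩
    obtain ⟨s, hs, hgs, hsq⟩ := hg.exists_removable hqA (Or.inr ⟨hidx, hlt⟩)
    unfold LadderLT at hgs
    unfold LadderLE at hsq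
    exact hs.1.isRowEnd.hasBadPair hℓ hq (by omega) (by omega)
  · push Not at hleft
    obtain ⟨hq1, hleft⟩ := hleft
    have hq2 : 2 ≤ q.2 := by have := hq.1; omega
    have hqg := snd_lt_of_ladderIdx_eq hidx hlt
    have hup : q.1 = 1 ∨ (q.1 - 1, q.2 - 1) ∈ P.cells := hq.2.2.imp_right fun h =>
      mem_cells_of_le h h.1 le_rfl (by omega) (by omega)
    refine (hgA.isRowEnd_pred (by omega)).hasBadPair hℓ ⟨by omega, hleft, hup⟩ ?_ hlt.le
    have := ladderIdx_pred_snd ℓ (p := g) (by omega)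
    have := ladderIdx_pred_snd ℓ (p := q) (by omega)
    omega

/- Either the pair moves up one row, or `(p.1, p.2 + 1)` is an addable node of the residue of
`g`, `ℓ` ladders after `g`, and the removable box that cogoodness puts in between completes a
bad pair. -/
theorem hasBadPair_of_ladderCogood_of_isRowEnd (hℓ : 2 ≤ ℓ) (hg : LadderCogood ℓ (res ℓ g) P g)
    (hp : IsRowEnd P p) (hidx : ladderIdx ℓ p = ladderIdx ℓ (g.1 + 1, g.2)) (hle : p.1 ≤ g.1) :
    HasBadPair ℓ P := by
  have hgA : Addable P g := hg.mem_addableRes.1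
  have hg2 : 1 ≤ g.2 := hgA.isColHole.1
  have hp2 : 1 ≤ p.2 := hp.1.2.1
  have := ladderIdx_succ_fst ℓ g
  by_cases hup : p.1 = 1 ∨ (p.1 - 1, p.2 + 1) ∈ P.cells
  · have htA : Addable P (p.1, p.2 + 1) :=
      addable_iff.mpr ⟨⟨by simp, hp.2, hup⟩, Or.inr (by simpa using hp.1)⟩
    have htidx : ladderIdx ℓ (p.1, p.2 + 1) = ladderIdx ℓ g + ℓ := by
      have := ladderIdx_succ_snd ℓ hp2
      omega
    have htres := res_eq_of_ladderIdx_eq_add (by omega) hg2 (by simp) htidx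
    obtain ⟨s, hs, hgs, hst⟩ := hg.exists_removable ⟨htA, htres.symm⟩ (Or.inl (by omega))
    have hs2 : 1 ≤ s.2 := hs.1.isRowEnd.1.2.1
    unfold LadderLT at hgs
    unfold LadderLE at hst
    rcases (by omega : ladderIdx ℓ s < ladderIdx ℓ g + ℓ ∨ ladderIdx ℓ s = ladderIdx ℓ g + ℓ)
      with hlt | heq
    · have := ladderIdx_eq_of_res_eq (by omega) hg2 hs2 hs.2.symm (by omega) hlt
      have := ladderIdx_succ_fst ℓ s
      exact hp.hasBadPair hℓ hs.1.isColHole_succ (by omega) (by simp only; omega)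
    · exact hs.1.isRowEnd.hasBadPair hℓ htA.isColHole (by omega) (by simp only at hst ⊢; omega)
  · push Not at hup
    obtain ⟨hp1, hup⟩ := hup
    have hp1 : 2 ≤ p.1 := by have := hp.1.1; omega
    have hrow : IsRowEnd P (p.1 - 1, p.2) :=
      ⟨mem_cells_of_le hp.1 (by omega) (by omega) hp2 le_rfl, hup⟩
    have := ladderIdx_pred_fst ℓ (p := p) (by omega)
    exact hrow.hasBadPair hℓ hgA.isColHole (by omega) (by simp only; omega)

theorem not_hasBadPair_of_cells_eq_insert (hℓ : 2 ≤ ℓ) (hg : LadderCogood ℓ (res ℓ g) P g)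
    (hQ : Q.cells = insert g P.cells) (hP : ¬ HasBadPair ℓ P) : ¬ HasBadPair ℓ Q := by
  rintro ⟨p, q, hp, hq, hidx, hlt⟩
  rcases hp.of_cells_eq_insert hQ with rfl | hp <;> rcases hq.of_cells_eq_insert hQ with rfl | hq
  · have := ladderIdx_succ_fst ℓ p
    omega
  · exact hP (hasBadPair_of_ladderCogood_of_isColHole hℓ hg hq hidx hlt)
  · exact hP (hasBadPair_of_ladderCogood_of_isRowEnd hℓ hg hp hidx (by simp only at hlt; omega))
  · exact hP ⟨p, q, hp, hq, hidx, hlt⟩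

/- Either the pair moved one column to the right is bad, or the box above `q` is removable, `ℓ`
ladders before `g`, and the addable node that goodness puts in between completes a bad pair. -/
theorem hasBadPair_of_ladderGood_of_isColHole (hℓ : 2 ≤ ℓ) (hg : LadderGood ℓ (res ℓ g) P g)
    (hq : IsColHole P q) (hidx : ladderIdx ℓ (g.1, g.2 - 1) = ladderIdx ℓ q) (hlt : g.1 < q.1)
    (hg2 : 2 ≤ g.2) : HasBadPair ℓ P := by
  have hgR : Removable P g := hg.mem_removableRes.1
  have hq1 := hq.one_le_fst
  have := ladderIdx_pred_snd ℓ hg2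
  by_cases hr : 2 ≤ q.1 ∧ (q.1 - 1, q.2 + 1) ∉ P.cells
  · have hrP : (q.1 - 1, q.2) ∈ P.cells := hq.2.2.resolve_left (by omega)
    have hrR : Removable P (q.1 - 1, q.2) :=
      removable_iff.mpr ⟨⟨hrP, hr.2⟩, by simpa [Nat.sub_add_cancel hq1] using hq.2.1⟩
    have := ladderIdx_pred_fst ℓ hq1
    have hgr : ladderIdx ℓ g = ladderIdx ℓ (q.1 - 1, q.2) + ℓ := by omega
    have hres := res_eq_of_ladderIdx_eq_add (p := (q.1 - 1, q.2)) (by omega) hq.1 (by omega) hgr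
    obtain ⟨t, ht, hrt, htg⟩ := hg.exists_addable ⟨hrR, hres⟩ (Or.inl (by omega))
    have ht2 : 1 ≤ t.2 := ht.1.isColHole.1
    unfold LadderLE at hrt
    unfold LadderLT at htg
    rcases (by omega : ladderIdx ℓ t < ladderIdx ℓ (q.1 - 1, q.2) + ℓ ∨
      ladderIdx ℓ t = ladderIdx ℓ g) with hlt' | heq
    · have := ladderIdx_eq_of_res_eq (p := (q.1 - 1, q.2)) (by omega) hq.1 ht2
        (hres.trans ht.2.symm) (by omega) hlt'
      exact hrR.isRowEnd.hasBadPair hℓ ht.1.isColHole this (by simp only at hrt ⊢; omega)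
    · have htg' : t.1 < g.1 := by omega
      have := snd_lt_of_ladderIdx_eq heq htg'
      have := ladderIdx_pred_snd ℓ (p := t) (by omega)
      exact (ht.1.isRowEnd_pred (by omega)).hasBadPair hℓ hq (by omega) (by simp only; omega)
  · have hhole : IsColHole P (q.1, q.2 + 1) :=
      ⟨by simp, fun h => hq.2.1 (mem_cells_of_le h hq1 le_rfl hq.1 (by simp)), by
        simp only
        by_contra h
        push Not at h
        exact hr ⟨by omega, h.2⟩⟩
    have := ladderIdx_succ_snd ℓ hq.1
    exact hgR.isRowEnd.hasBadPair hℓ hhole (by omega) (by simp only; omega)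

/- Either the pair moves down one row, or `p` is removable and goodness of `g` puts an addable
node below `p` on their ladder. -/
theorem hasBadPair_of_ladderGood_of_isRowEnd (hℓ : 2 ≤ ℓ) (hg : LadderGood ℓ (res ℓ g) P g)
    (hp : IsRowEnd P p) (hidx : ladderIdx ℓ p = ladderIdx ℓ g) (hlt : p.1 < g.1) :
    HasBadPair ℓ P := by
  have hgR : Removable P g := hg.mem_removableRes.1
  by_cases hdown : (p.1 + 1, p.2) ∈ P.cells
  · have hrow : IsRowEnd P (p.1 + 1, p.2) := ⟨hdown, fun h =>
      hp.2 (mem_cells_of_le h hp.1.1 (by omega) (by simp) le_rfl)⟩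
    have := ladderIdx_succ_fst ℓ p
    have := ladderIdx_succ_fst ℓ g
    exact hrow.hasBadPair hℓ hgR.isColHole_succ (by omega) (by simp only; omega)
  · have hpR : Removable P p := removable_iff.mpr ⟨hp, hdown⟩
    have hres := res_eq_of_ladderIdx_eq (by omega) hp.1.2.1 hgR.isRowEnd.1.2.1 hidx
    obtain ⟨t, ht, hpt, htg⟩ := hg.exists_addable ⟨hpR, hres⟩ (Or.inr ⟨hidx, hlt⟩)
    unfold LadderLE at hpt
    unfold LadderLT at htg
    exact hp.hasBadPair hℓ ht.1.isColHole (by omega) (by omega)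

theorem not_hasBadPair_of_cells_eq_diff (hℓ : 2 ≤ ℓ) (hg : LadderGood ℓ (res ℓ g) P g)
    (hQ : Q.cells = P.cells \ {g}) (hP : ¬ HasBadPair ℓ P) : ¬ HasBadPair ℓ Q := by
  rintro ⟨p, q, hp, hq, hidx, hlt⟩
  have hp2 : 1 ≤ p.2 := hp.1.2.1
  rcases hp.of_cells_eq_diff hQ with rfl | hp <;> rcases hq.of_cells_eq_diff hQ with rfl | hq
  · simp at hlt
  · exact hP (hasBadPair_of_ladderGood_of_isColHole hℓ hg hq hidx hlt (by simp only at hp2; omega))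
  · exact hP (hasBadPair_of_ladderGood_of_isRowEnd hℓ hg hp hidx hlt)
  · exact hP ⟨p, q, hp, hq, hidx, hlt⟩

end Preservation

section Nodes

variable {ℓ : ℕ} {P Q : YPartition} {t : ℕ × ℕ}

theorem Addable.exists_mem_cells (hℓ : 2 ≤ ℓ) (ht : Addable P t) (hne : P.cells.Nonempty) :
    ∃ n ∈ P.cells, ladderIdx ℓ t ≤ ladderIdx ℓ n + (ℓ - 1) := by
  obtain ⟨⟨ht2, htP, hup⟩, hleft⟩ := addable_iff.mp ht
  by_cases h2 : 2 ≤ t.2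
  · exact ⟨_, hleft.resolve_left (by omega), (ladderIdx_pred_snd ℓ h2).ge⟩
  rcases hup with h1 | hup
  · obtain ⟨c, hc⟩ := hne
    exact (htP (mem_cells_of_le (a := c.1) (b := c.2) hc (by omega) (by have := hc.1; omega) ht2
      (by have := hc.2.1; omega))).elim
  · have := ladderIdx_pred_fst ℓ (p := t) (by have := hup.1; simp only at this; omega)
    exact ⟨_, hup, by omega⟩

/- The last box in ladder order is normal: an addable node read after it lies either below it on
its ladder, giving a bad pair, or at least `ℓ` ladders later, too far from every box. -/
theorem exists_ladderNormal (hℓ : 2 ≤ ℓ) (hP : ¬ HasBadPair ℓ P) (hne : P.cells.Nonempty) :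
    ∃ g, LadderNormal ℓ (res ℓ g) P g := by
  obtain ⟨g, hg, hmax⟩ := exists_max_image P.cells (ladderKey ℓ) P.cells_finite hne
  have hmax' : ∀ c ∈ P.cells, ladderIdx ℓ c ≤ ladderIdx ℓ g := fun c hc => by
    have := ladderLE_iff.mpr (hmax c hc)
    unfold LadderLE at this
    omega
  have hgR : Removable P g := by
    refine removable_iff.mpr ⟨⟨hg, fun h => ?_⟩, fun h => ?_⟩
    · have := hmax' _ h
      have := ladderIdx_succ_snd ℓ hg.2.1
      omega
    · have := hmax' _ h
      have := ladderIdx_succ_fst ℓ g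
      omega
  refine ⟨g, ?_⟩
  rw [LadderNormal, ladderLE_eq]
  refine normalIn_of_forall_le (ladderKey_injOn_marks hℓ) ⟨hgR, rfl⟩
    (fun h => (addable_iff.mp h.1).1.2.1 hg) fun t ht => ?_
  rcases ht with ht | ht
  · exact hmax t (removable_iff.mp ht.1).1.1
  by_contra hlt
  have hlt := ladderLT_iff.mpr (not_le.mp hlt)
  unfold LadderLT at hlt
  rcases hlt with hlt | ⟨heq, hlt⟩
  · obtain ⟨n, hn, hidx⟩ := ht.1.exists_mem_cells hℓ hne
    have := hmax' n hn
    have := ladderIdx_eq_of_res_eq (by omega) hg.2.1 ht.1.isColHole.1 ht.2.symm hlt.le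
    omega
  · exact hP ⟨g, t, hgR.isRowEnd, ht.1.isColHole, heq, hlt⟩

def removeBox (P : YPartition) (g : ℕ × ℕ) (hg : Removable P g) : YPartition where
  part a := if a = g.1 then g.2 - 1 else P.part a
  zero_at_zero := by
    rw [if_neg (by have := hg.1; omega)]
    exact P.zero_at_zero
  antitone i j hi hij := by
    obtain ⟨hg1, hg2, hg3⟩ := hg
    have := P.antitone i j hi hij
    have hi' : i ≤ g.1 → P.part g.1 ≤ P.part i := P.antitone i g.1 hi
    have hj' : g.1 + 1 ≤ j → P.part j ≤ P.part (g.1 + 1) := P.antitone (g.1 + 1) j (by omega)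
    split_ifs <;> omega
  eventually_zero := by
    obtain ⟨N, hN⟩ := P.eventually_zero
    exact ⟨N + g.1 + 1, fun i hi => by rw [if_neg (by omega)]; exact hN i (by omega)⟩

theorem cells_removeBox {g : ℕ × ℕ} (hg : Removable P g) :
    (P.removeBox g hg).cells = P.cells \ {g} := by
  ext ⟨a, b⟩
  simp only [cells, removeBox, mem_ofPred_eq, mem_sdiff, mem_singleton_iff, Prod.ext_iff]
  obtain ⟨hg1, hg2, hg3⟩ := hg
  split_ifs with ha
  · subst ha
    omega
  · omega

theorem not_hasBadPair_emptyP : ¬ HasBadPair ℓ emptyP := fun ⟨_, _, hp, _⟩ => by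
  have h := hp.1.2
  simp only [emptyP] at h
  omega

theorem not_hasBadPair_of_ladderNode (hℓ : 2 ≤ ℓ) (h : LadderNode ℓ P) : ¬ HasBadPair ℓ P := by
  induction h with
  | refl => exact not_hasBadPair_emptyP
  | tail _ hstep ih =>
    obtain ⟨i, -, g, hg, hcells⟩ := hstep
    obtain rfl : res ℓ g = i := hg.mem_addableRes.2
    exact not_hasBadPair_of_cells_eq_insert hℓ hg hcells ih

theorem ladderNode_of_not_hasBadPair (hℓ : 2 ≤ ℓ) (hP : ¬ HasBadPair ℓ P) : LadderNode ℓ P := by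
  induction hn : P.cells.ncard using Nat.strong_induction_on generalizing P with
  | _ n ih =>
    rcases P.cells.eq_empty_or_nonempty with hemp | hne
    · rw [eq_emptyP_of_cells_eq_empty hemp]
      exact .refl
    obtain ⟨p, hp⟩ := exists_ladderNormal hℓ hP hne
    obtain ⟨g, hg⟩ := exists_ladderGood hp
    rw [← hg.mem_removableRes.2] at hg
    have hgR : Removable P g := hg.mem_removableRes.1
    have hgP : g ∈ P.cells := hgR.isRowEnd.1
    have hQ := cells_removeBox hgR
    have hcard : (P.removeBox g hgR).cells.ncard < n := by
      rw [hQ, ← hn]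
      exact ncard_sdiff_singleton_lt_of_mem hgP P.cells_finite
    refine .tail (ih _ hcard (not_hasBadPair_of_cells_eq_diff hℓ hg hQ hP) rfl)
      ⟨res ℓ g, res_lt (by omega) g, g, hg.ladderCogood_of_cells_eq_diff hℓ hQ, ?_⟩
    rw [hQ, insert_sdiff_singleton, insert_eq_of_mem hgP]

end Nodes

theorem not_exists_hook_eq_of_isLPartition {ℓ : ℕ} {P : YPartition} (hL : IsLPartition ℓ P) :
    ¬ ∃ p ∈ P.cells, P.hook p.1 p.2 = ℓ * P.arm p.1 p.2 := by
  rintro ⟨p, hp, heq⟩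
  refine hL ⟨p, hp, ⟨P.arm p.1 p.2, heq⟩, Or.inr ?_⟩
  have hhook : P.hook p.1 p.2 = P.arm p.1 p.2 + P.leg p.1 p.2 + 1 := rfl
  have hℓ : 1 ≤ ℓ := by
    by_contra h0
    simp only [show ℓ = 0 by omega, zero_mul] at heq
    omega
  have := sub_one_mul_add_self hℓ (P.arm p.1 p.2)
  omega

end YPartition

open YPartition

/-- `λ` is a node of `B(Λ₀)^L` iff no box `(i,j)` of `λ` satisfies
`h_(i,j) = ℓ · arm(i,j)`; moreover every L-partition is a node of `B(Λ₀)^L`. -/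
theorem statement19 (ℓ : ℕ) (hℓ : 2 < ℓ) (lam : YPartition) :
    (LadderNode ℓ lam ↔
      ¬ ∃ p : ℕ × ℕ, p ∈ lam.cells ∧ lam.hook p.1 p.2 = ℓ * lam.arm p.1 p.2) ∧
    (IsLPartition ℓ lam → LadderNode ℓ lam) := by
  have hnode : LadderNode ℓ lam ↔ ¬ HasBadPair ℓ lam :=
    ⟨not_hasBadPair_of_ladderNode hℓ.le, ladderNode_of_not_hasBadPair hℓ.le⟩
  rw [hasBadPair_iff_exists_hook_eq] at hnode
  exact ⟨hnode, fun hL => hnode.mpr (not_exists_hook_eq_of_isLPartition hL)⟩
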